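/- Let F : (0, ∞) → ℝ be nondecreasing with 0 ≤ F(x) ≤ 1 for all x. Assume there exist constants C, y₀ > 0 and r > 0 such that F(x) ≤ F(C x y^{−2})² + C ( y² F(y)⁴ + y^r + 2 F(C x)² ) for all x > 0 and all y ∈ (0, y₀), and assume there exist C₀, x₀, α₀ > 0 such that F(x) ≤ C₀ x^{α₀} for all x ∈ (0, x₀]. Then for every γ ∈ (0, r/4) there exist C₁, x₁ > 0 such that F(x) ≤ C₁ x^{γ} for all x ∈ (0, x₁]. In particular, if r > 12, then F(x) ≤ C₁ x^{3+ε} near 0 for some ε > 0. -/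

import Mathlib

/-!
Take `y = x ^ β` in the two-step inequality, with `β` slightly below `1/4`. If `F = O(x ^ α)`
near `0`, the four terms on the right are `O(x ^ (2α(1 - 2β)))`, `O(x ^ (β(2 + 4α)))`,
`O(x ^ (βr))` and `O(x ^ (2α))`. Since `4γ < r`, `β` can be chosen so that, for `α₀ ≤ α < γ`,
each of these exponents exceeds `α` by at least a fixed `δ > 0`; finitely many steps starting
from the a-priori exponent `α₀` therefore reach `γ`.
-/

open Asymptotics Filter Set Topology

theorem isBigO_rpow_rpow_nhdsGT_zero_of_le {a b : ℝ} (h : a ≤ b) :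
    (· ^ b : ℝ → ℝ) =O[𝓝[>] 0] (· ^ a) :=
  .of_bound' <| mem_of_superset (Ioo_mem_nhdsGT one_pos) fun x hx ↦ by
    simpa [Real.abs_rpow_of_nonneg hx.1.le, abs_of_pos hx.1]
      using Real.rpow_le_rpow_of_exponent_ge hx.1 hx.2.le h

theorem tendsto_const_mul_rpow_nhdsGT_zero {c w : ℝ} (hc : 0 < c) (hw : 0 < w) :
    Tendsto (fun x : ℝ ↦ c * x ^ w) (𝓝[>] 0) (𝓝[>] 0) := by
  refine tendsto_nhdsWithin_of_tendsto_nhds_of_eventually_within _ ?_ ?_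
  · have := ((Real.continuousAt_rpow_const 0 w (Or.inr hw.le)).const_mul c).tendsto
    rw [Real.zero_rpow hw.ne', mul_zero] at this
    exact this.mono_left nhdsWithin_le_nhds
  · filter_upwards [self_mem_nhdsWithin] with x (hx : 0 < x)
    exact mul_pos hc (Real.rpow_pos_of_pos hx w)

theorem Asymptotics.IsBigO.comp_const_mul_rpow {F : ℝ → ℝ} {α c w : ℝ}
    (hF : F =O[𝓝[>] 0] (· ^ α)) (hc : 0 < c) (hw : 0 < w) :
    (fun x ↦ F (c * x ^ w)) =O[𝓝[>] 0] (· ^ (w * α)) := by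
  refine (hF.comp_tendsto (tendsto_const_mul_rpow_nhdsGT_zero hc hw)).trans ?_
  refine EventuallyEq.trans_isBigO ?_ ((isBigO_refl _ _).const_mul_left (c ^ α))
  filter_upwards [self_mem_nhdsWithin] with x (hx : 0 < x)
  simp only [Function.comp_apply]
  rw [Real.mul_rpow hc.le (Real.rpow_nonneg hx.le w), ← Real.rpow_mul hx.le]

theorem Asymptotics.IsBigO.pow_rpow {f : ℝ → ℝ} {u : ℝ} (hf : f =O[𝓝[>] 0] (· ^ u)) (n : ℕ) :
    (fun x ↦ f x ^ n) =O[𝓝[>] 0] (· ^ (u * n)) := by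
  refine (hf.pow n).trans (EventuallyEq.isBigO ?_)
  filter_upwards [self_mem_nhdsWithin] with x (hx : 0 < x)
  exact (Real.rpow_mul_natCast hx.le u n).symm

theorem Asymptotics.IsBigO.mul_rpow {f g : ℝ → ℝ} {a b : ℝ} (hf : f =O[𝓝[>] 0] (· ^ a))
    (hg : g =O[𝓝[>] 0] (· ^ b)) : (fun x ↦ f x * g x) =O[𝓝[>] 0] (· ^ (a + b)) := by
  refine (hf.mul hg).trans (EventuallyEq.isBigO ?_)
  filter_upwards [self_mem_nhdsWithin] with x (hx : 0 < x)
  exact (Real.rpow_add hx a b).symm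

theorem Antitone.holds_of_add_step {P : ℝ → Prop} (hP : Antitone P) {a γ δ : ℝ} (hδ : 0 < δ)
    (ha : P a) (hstep : ∀ α, a ≤ α → α < γ → P α → P (α + δ)) : P γ := by
  have key : ∀ n : ℕ, P (min (a + n * δ) γ) := by
    intro n
    induction n with
    | zero => simpa using hP (min_le_left a γ) ha
    | succ n ih =>
      by_cases hn : a + n * δ < γ
      · rw [min_eq_left hn.le] at ih
        refine hP (min_le_left _ _) ?_
        have := hstep _ (le_add_of_nonneg_right (by positivity)) hn ih
        rwa [Nat.cast_succ, add_one_mul, ← add_assoc]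
      · rw [min_eq_right (not_lt.1 hn)] at ih
        exact hP (min_le_right _ _) ih
  obtain ⟨n, hn⟩ := exists_nat_ge ((γ - a) / δ)
  have : γ ≤ a + n * δ := by rw [div_le_iff₀ hδ] at hn; linarith
  simpa [min_eq_right this] using key n

def TwoStepInequality (F : ℝ → ℝ) (C y₀ r : ℝ) : Prop :=
  ∀ x : ℝ, 0 < x → ∀ y ∈ Ioo (0 : ℝ) y₀,
    F x ≤ F (C * x * y⁻¹ ^ 2) ^ 2 + C * (y ^ 2 * F y ^ 4 + y ^ r + 2 * F (C * x) ^ 2)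

namespace TwoStepInequality

variable {F : ℝ → ℝ} {C y₀ r : ℝ}

theorem isBigO_rpow_of_isBigO (hrec : TwoStepInequality F C y₀ r) (hF0 : ∀ x, 0 < x → 0 ≤ F x)
    (hC : 0 < C) (hy₀ : 0 < y₀) {α β s : ℝ} (hF : F =O[𝓝[>] 0] (· ^ α)) (hβ : 0 < β)
    (hβ₂ : 2 * β < 1) (h₁ : s ≤ 2 * α * (1 - 2 * β)) (h₂ : s ≤ β * (2 + 4 * α))
    (h₃ : s ≤ β * r) (h₄ : s ≤ 2 * α) : F =O[𝓝[>] 0] (· ^ s) := by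
  have hT₁ : (fun x ↦ F (C * x ^ (1 - 2 * β)) ^ 2) =O[𝓝[>] 0] (· ^ s) :=
    ((hF.comp_const_mul_rpow hC (by linarith)).pow_rpow 2).trans
      (isBigO_rpow_rpow_nhdsGT_zero_of_le (by push_cast; linarith))
  have hT₂ : (fun x ↦ (x ^ β) ^ 2 * F (x ^ β) ^ 4) =O[𝓝[>] 0] (· ^ s) := by
    have hFy : (fun x ↦ F (x ^ β)) =O[𝓝[>] 0] (· ^ (β * α)) := by
      simpa only [one_mul] using hF.comp_const_mul_rpow one_pos hβ
    exact (((isBigO_refl _ _).pow_rpow 2).mul_rpow (hFy.pow_rpow 4)).trans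
      (isBigO_rpow_rpow_nhdsGT_zero_of_le (by push_cast; linarith))
  have hT₃ : (fun x : ℝ ↦ (x ^ β) ^ r) =O[𝓝[>] 0] (· ^ s) := by
    refine EventuallyEq.trans_isBigO ?_ (isBigO_rpow_rpow_nhdsGT_zero_of_le h₃)
    filter_upwards [self_mem_nhdsWithin] with x (hx : 0 < x)
    exact (Real.rpow_mul hx.le β r).symm
  have hT₄ : (fun x ↦ F (C * x) ^ 2) =O[𝓝[>] 0] (· ^ s) := by
    have hFCx := hF.comp_const_mul_rpow hC one_pos
    simp only [Real.rpow_one, one_mul] at hFCx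
    exact (hFCx.pow_rpow 2).trans (isBigO_rpow_rpow_nhdsGT_zero_of_le (by push_cast; linarith))
  have hle : ∀ᶠ x in 𝓝[>] 0, ‖F x‖ ≤ ‖F (C * x ^ (1 - 2 * β)) ^ 2 +
      C * ((x ^ β) ^ 2 * F (x ^ β) ^ 4 + (x ^ β) ^ r + 2 * F (C * x) ^ 2)‖ := by
    filter_upwards [self_mem_nhdsWithin,
      tendsto_const_mul_rpow_nhdsGT_zero one_pos hβ (Ioo_mem_nhdsGT hy₀)] with x (hx : 0 < x) hy
    rw [mem_preimage, one_mul] at hy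
    have hxβ : C * x * (x ^ β)⁻¹ ^ 2 = C * x ^ (1 - 2 * β) := by
      rw [Real.rpow_sub hx, Real.rpow_one, mul_comm 2 β, Real.rpow_mul hx.le, Real.rpow_two]
      ring
    rw [Real.norm_of_nonneg (hF0 x hx), ← hxβ]
    exact (hrec x hx _ hy).trans (le_abs_self _)
  exact (IsBigO.of_bound' hle).trans
    (hT₁.add (((hT₂.add hT₃).add (hT₄.const_mul_left 2)).const_mul_left C))

theorem isBigO_rpow_of_four_mul_lt (hrec : TwoStepInequality F C y₀ r)
    (hF0 : ∀ x, 0 < x → 0 ≤ F x) (hC : 0 < C) (hy₀ : 0 < y₀) {α₀ γ : ℝ} (hα₀ : 0 < α₀)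
    (hF : F =O[𝓝[>] 0] (· ^ α₀)) (hγ : 0 < γ) (hγr : 4 * γ < r) : F =O[𝓝[>] 0] (· ^ γ) := by
  have hr : 0 < r := by linarith
  have hθ : max (γ / r) (γ / (2 + 4 * γ)) < 1 / 4 := by
    refine max_lt ?_ ?_ <;> rw [div_lt_iff₀ (by positivity)] <;> linarith
  obtain ⟨β, hθβ, hβ⟩ := exists_between hθ
  rw [max_lt_iff, div_lt_iff₀ hr, div_lt_iff₀ (by positivity)] at hθβ
  have hβ0 : 0 < β := by nlinarith
  set δ := min (α₀ * (1 - 4 * β)) (min (β * r - γ) (β * (2 + 4 * γ) - γ))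
  have hδ : 0 < δ := lt_min (by nlinarith) (lt_min (by linarith) (by linarith))
  have hδ₁ : δ ≤ α₀ * (1 - 4 * β) := min_le_left _ _
  have hδ₂ : δ ≤ β * r - γ := (min_le_right _ _).trans (min_le_left _ _)
  have hδ₃ : δ ≤ β * (2 + 4 * γ) - γ := (min_le_right _ _).trans (min_le_right _ _)
  refine Antitone.holds_of_add_step (P := fun a ↦ F =O[𝓝[>] 0] (· ^ a))
    (fun a b hab hb ↦ hb.trans (isBigO_rpow_rpow_nhdsGT_zero_of_le hab)) hδ hF
    fun α hα hαγ hFα ↦ ?_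
  refine hrec.isBigO_rpow_of_isBigO hF0 hC hy₀ hFα hβ0 (by linarith) ?_ ?_ ?_ ?_
  all_goals nlinarith

end TwoStepInequality

theorem Asymptotics.IsBigO.exists_pos_forall_Ioc_le_mul_rpow {F : ℝ → ℝ} {γ : ℝ}
    (h : F =O[𝓝[>] 0] (· ^ γ)) :
    ∃ C₁ : ℝ, 0 < C₁ ∧ ∃ x₁ : ℝ, 0 < x₁ ∧ ∀ x ∈ Ioc (0 : ℝ) x₁, F x ≤ C₁ * x ^ γ := by
  obtain ⟨c, hc, hb⟩ := h.exists_pos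
  obtain ⟨x₁, hx₁, hsub⟩ := mem_nhdsGT_iff_exists_Ioc_subset.1 hb.bound
  refine ⟨c, hc, x₁, hx₁, fun x hx ↦ ?_⟩
  have hbx : ‖F x‖ ≤ c * ‖x ^ γ‖ := hsub hx
  rw [Real.norm_of_nonneg (Real.rpow_nonneg hx.1.le γ)] at hbx
  exact (Real.le_norm_self _).trans hbx

theorem isBigO_rpow_of_forall_Ioc_le_mul_rpow {F : ℝ → ℝ} {C₀ x₀ α : ℝ}
    (hF0 : ∀ x, 0 < x → 0 ≤ F x) (hx₀ : 0 < x₀) (h : ∀ x ∈ Ioc (0 : ℝ) x₀, F x ≤ C₀ * x ^ α) :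
    F =O[𝓝[>] 0] (· ^ α) :=
  .of_bound C₀ <| mem_of_superset (Ioc_mem_nhdsGT hx₀) fun x hx ↦ show ‖F x‖ ≤ C₀ * ‖x ^ α‖ by
    rw [Real.norm_of_nonneg (hF0 x hx.1), Real.norm_of_nonneg (Real.rpow_nonneg hx.1.le α)]
    exact h x hx

theorem bootstrap_power_law_K_eq_two_general
    (F : ℝ → ℝ)
    (hF01 : ∀ x : ℝ, 0 < x → F x ∈ Set.Icc (0 : ℝ) 1)
    (C y₀ r : ℝ) (hC : 0 < C) (hy₀ : 0 < y₀)
    (hrec : ∀ x : ℝ, 0 < x → ∀ y ∈ Set.Ioo (0 : ℝ) y₀,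
      F x ≤ F (C * x * y⁻¹ ^ 2) ^ 2 + C * (y ^ 2 * F y ^ 4 + y ^ r + 2 * F (C * x) ^ 2))
    (C₀ x₀ α₀ : ℝ) (hx₀ : 0 < x₀) (hα₀ : 0 < α₀)
    (hapriori : ∀ x ∈ Set.Ioc (0 : ℝ) x₀, F x ≤ C₀ * x ^ α₀) :
    (∀ γ ∈ Set.Ioo (0 : ℝ) (r / 4), ∃ C₁ : ℝ, 0 < C₁ ∧ ∃ x₁ : ℝ, 0 < x₁ ∧
        ∀ x ∈ Set.Ioc (0 : ℝ) x₁, F x ≤ C₁ * x ^ γ) ∧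
      (12 < r → ∃ ε : ℝ, 0 < ε ∧ ∃ C₁ : ℝ, 0 < C₁ ∧ ∃ x₁ : ℝ, 0 < x₁ ∧
        ∀ x ∈ Set.Ioc (0 : ℝ) x₁, F x ≤ C₁ * x ^ (3 + ε)) := by
  have hF0 : ∀ x, 0 < x → 0 ≤ F x := fun x hx ↦ (hF01 x hx).1
  have hF := isBigO_rpow_of_forall_Ioc_le_mul_rpow hF0 hx₀ hapriori
  have main : ∀ γ ∈ Ioo (0 : ℝ) (r / 4), ∃ C₁ : ℝ, 0 < C₁ ∧ ∃ x₁ : ℝ, 0 < x₁ ∧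
      ∀ x ∈ Ioc (0 : ℝ) x₁, F x ≤ C₁ * x ^ γ := fun γ ⟨hγ, hγr⟩ ↦
    (TwoStepInequality.isBigO_rpow_of_four_mul_lt hrec hF0 hC hy₀ hα₀ hF hγ (by linarith)
      ).exists_pos_forall_Ioc_le_mul_rpow
  exact ⟨main, fun hr ↦ ⟨(r - 12) / 8, by linarith, main _ ⟨by linarith, by linarith⟩⟩⟩

/-- Bootstrap for branching number `K = 2`: if a nondecreasing
`F : (0,∞) → [0,1]` satisfies the two-step inequality
`F(x) ≤ F(Cx y⁻²)² + C (y² F(y)⁴ + y^r + 2 F(Cx)²)` together with an a-priori power bound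
`F(x) ≤ C₀ x^{α₀}` near `0`, then for every `γ < r/4` one has `F(x) ≤ C₁ x^γ` near `0`;
in particular, for `r > 12`, `F(x) ≤ C₁ x^{3+ε}` near `0` for some `ε > 0`. -/
theorem bootstrap_power_law_K_eq_two
    (F : ℝ → ℝ)
    (hmono : ∀ x y : ℝ, 0 < x → x ≤ y → F x ≤ F y)
    (hF01 : ∀ x : ℝ, 0 < x → F x ∈ Set.Icc (0 : ℝ) 1)
    (C y₀ r : ℝ) (hC : 0 < C) (hy₀ : 0 < y₀) (hr : 0 < r)
    (hrec : ∀ x : ℝ, 0 < x → ∀ y ∈ Set.Ioo (0 : ℝ) y₀,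
      F x ≤ F (C * x * y⁻¹ ^ 2) ^ 2 + C * (y ^ 2 * F y ^ 4 + y ^ r + 2 * F (C * x) ^ 2))
    (C₀ x₀ α₀ : ℝ) (hC₀ : 0 < C₀) (hx₀ : 0 < x₀) (hα₀ : 0 < α₀)
    (hapriori : ∀ x ∈ Set.Ioc (0 : ℝ) x₀, F x ≤ C₀ * x ^ α₀) :
    (∀ γ ∈ Set.Ioo (0 : ℝ) (r / 4), ∃ C₁ : ℝ, 0 < C₁ ∧ ∃ x₁ : ℝ, 0 < x₁ ∧
        ∀ x ∈ Set.Ioc (0 : ℝ) x₁, F x ≤ C₁ * x ^ γ) ∧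
      (12 < r → ∃ ε : ℝ, 0 < ε ∧ ∃ C₁ : ℝ, 0 < C₁ ∧ ∃ x₁ : ℝ, 0 < x₁ ∧
        ∀ x ∈ Set.Ioc (0 : ℝ) x₁, F x ≤ C₁ * x ^ (3 + ε)) :=
  bootstrap_power_law_K_eq_two_general F hF01 C y₀ r hC hy₀ hrec C₀ x₀ α₀ hx₀ hα₀ hapriori
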